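/- arXiv:2504.09749 — 2 statements merged into one kernel-verified Lean document; each statement's English description precedes it below -/
import Mathlib

section
/- For a valid grid diagram (σX, σO) of size n, the number of connected components of its grid graph equals the number of orbits of the cyclic subgroup generated by the connection permutation σO⁻¹ * σX acting on Fin n (i.e., the cardinality of the orbit space). This identifies the number of link components of the diagram with the number of cycles of σO⁻¹ * σX. -/
/-- The incidence relation of a grid diagram encoded by permutations `σX, σO`:
the row `Sum.inl i` is related to the column `Sum.inr c` iff `c` is the column of
the `X` marking or of the `O` marking in row `i`. -/
def gridRel {n : ℕ} (σX σO : Equiv.Perm (Fin n)) :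
    (Fin n ⊕ Fin n) → (Fin n ⊕ Fin n) → Prop
  | Sum.inl i, Sum.inr c => c = σX i ∨ c = σO i
  | _, _ => False

/-- The grid graph of a grid diagram: the simple graph on rows and columns,
with a row adjacent to a column iff one of the two markings of that row lies
in that column. -/
def gridGraph {n : ℕ} (σX σO : Equiv.Perm (Fin n)) : SimpleGraph (Fin n ⊕ Fin n) :=
  SimpleGraph.fromRel (gridRel σX σO)

/-!
A column `c` of the grid is adjacent exactly to the rows `σX⁻¹ c` and `σO⁻¹ c`, and the
connection permutation `σO⁻¹ * σX` maps the first to the second. Hence a walk through a column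
moves from a row `i` to `(σO⁻¹ * σX) i` or back, so two rows lie in the same connected component
exactly when they lie in the same cycle of `σO⁻¹ * σX`; and every column lies in the component of
a row.
-/

namespace Equiv.Perm

variable {α : Type*}

theorem orbitRel_zpowers (f : Perm α) :
    MulAction.orbitRel (Subgroup.zpowers f) α = SameCycle.setoid f := by
  ext x y
  rw [MulAction.orbitRel_apply, MulAction.mem_orbit_iff, Subgroup.exists_zpowers]
  exact sameCycle_comm

theorem sameCycle_le_of_equivalence {f : Perm α} {r : α → α → Prop} (hr : Equivalence r)
    (h : ∀ x, r x (f x)) : f.SameCycle ≤ r := by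
  rintro x _ ⟨k, rfl⟩
  induction k using Int.induction_on with
  | zero => exact hr.refl x
  | succ k ih => exact hr.trans ih (by rw [add_comm, zpow_one_add, mul_apply]; exact h _)
  | pred k ih =>
    refine hr.trans ih (hr.symm ?_)
    simpa [← mul_apply, ← zpow_one_add] using h ((f ^ (-(k : ℤ) - 1)) x)

end Equiv.Perm

section GridGraph

open Equiv Perm SimpleGraph Function

variable {n : ℕ} (σX σO : Perm (Fin n))

/-- Collapses each column onto the row of its `X` marking; adjacent vertices then land in the
same cycle of `σO⁻¹ * σX`. -/
def gridRow : Fin n ⊕ Fin n → Fin n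
  | Sum.inl i => i
  | Sum.inr c => σX⁻¹ c

theorem sameCycle_gridRow_of_gridRel {v w : Fin n ⊕ Fin n} (h : gridRel σX σO v w) :
    (σO⁻¹ * σX).SameCycle (gridRow σX v) (gridRow σX w) := by
  match v, w, h with
  | Sum.inl i, Sum.inr _, Or.inl rfl => simpa [gridRow] using SameCycle.refl _ i
  | Sum.inl i, Sum.inr _, Or.inr rfl =>
    rw [gridRow, gridRow, ← sameCycle_apply_right]
    simpa using SameCycle.refl _ i

theorem sameCycle_gridRow_of_reachable {v w : Fin n ⊕ Fin n}
    (h : (gridGraph σX σO).Reachable v w) :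
    (σO⁻¹ * σX).SameCycle (gridRow σX v) (gridRow σX w) := by
  have hadj : (gridGraph σX σO).Adj ≤ ((σO⁻¹ * σX).SameCycle on gridRow σX) := by
    rintro v w ⟨-, h | h⟩
    · exact sameCycle_gridRow_of_gridRel σX σO h
    · exact (sameCycle_gridRow_of_gridRel σX σO h).symm
  rw [reachable_iff_reflTransGen] at h
  exact Relation.reflTransGen_le_of_equivalence_of_le (SameCycle.equivalence _) le_rfl _ _
    (Relation.ReflTransGen.lift _ hadj _ _ h)

theorem gridGraph_adj_inl_inr_apply (i : Fin n) :
    (gridGraph σX σO).Adj (Sum.inl i) (Sum.inr (σX i)) :=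
  ⟨Sum.inl_ne_inr, Or.inl (Or.inl rfl)⟩

theorem gridGraph_reachable_inl_connection (i : Fin n) :
    (gridGraph σX σO).Reachable (Sum.inl i) (Sum.inl ((σO⁻¹ * σX) i)) := by
  have hO : (gridGraph σX σO).Adj (Sum.inl ((σO⁻¹ * σX) i)) (Sum.inr (σX i)) :=
    ⟨Sum.inl_ne_inr, Or.inl (Or.inr (by simp))⟩
  exact (gridGraph_adj_inl_inr_apply σX σO i).reachable.trans hO.reachable.symm

theorem gridGraph_reachable_inl_inl_iff (i j : Fin n) :
    (gridGraph σX σO).Reachable (Sum.inl i) (Sum.inl j) ↔ (σO⁻¹ * σX).SameCycle i j :=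
  ⟨sameCycle_gridRow_of_reachable σX σO,
    sameCycle_le_of_equivalence ((reachable_is_equivalence _).comap Sum.inl)
      (gridGraph_reachable_inl_connection σX σO) i j⟩

theorem gridGraph_connectedComponentMk_inl_surjective :
    Function.Surjective fun i ↦ (gridGraph σX σO).connectedComponentMk (Sum.inl i) := by
  refine ConnectedComponent.ind fun v ↦ ?_
  rcases v with i | c
  · exact ⟨i, rfl⟩
  · refine ⟨σX⁻¹ c, ConnectedComponent.sound (Adj.reachable ?_)⟩
    simpa using gridGraph_adj_inl_inr_apply σX σO (σX⁻¹ c)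

theorem gridGraph_ker_connectedComponentMk_inl :
    Setoid.ker (fun i ↦ (gridGraph σX σO).connectedComponentMk (Sum.inl i)) =
      SameCycle.setoid (σO⁻¹ * σX) := by
  ext i j
  exact ConnectedComponent.eq.trans (gridGraph_reachable_inl_inl_iff σX σO i j)

end GridGraph

theorem card_connectedComponent_eq_card_orbits_general {n : ℕ} (σX σO : Equiv.Perm (Fin n)) :
    Nat.card (gridGraph σX σO).ConnectedComponent =
      Nat.card (MulAction.orbitRel.Quotient (Subgroup.zpowers (σO⁻¹ * σX)) (Fin n)) := by
  rw [MulAction.orbitRel.Quotient, Equiv.Perm.orbitRel_zpowers,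
    ← gridGraph_ker_connectedComponentMk_inl]
  exact Nat.card_congr (Setoid.quotientKerEquivOfSurjective _
    (gridGraph_connectedComponentMk_inl_surjective σX σO)).symm

/-- The number of connected components of the grid graph of a valid grid diagram
equals the number of orbits on `Fin n` of the cyclic subgroup generated by the
connection permutation `σO⁻¹ * σX`: the number of link components of the diagram
is the number of cycles of `σO⁻¹ * σX`. -/
theorem card_connectedComponent_eq_card_orbits {n : ℕ} (σX σO : Equiv.Perm (Fin n))
    (hvalid : ∀ i, σX i ≠ σO i) :
    Nat.card (gridGraph σX σO).ConnectedComponent =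
      Nat.card (MulAction.orbitRel.Quotient (Subgroup.zpowers (σO⁻¹ * σX)) (Fin n)) :=
  card_connectedComponent_eq_card_orbits_general σX σO
end

section
/- Exchanging the two O markings between rows i and j of a grid diagram is a coherent band attachment on the diagram: let (σX, σO) be a valid grid diagram of size n, let i ≠ j be rows, and assume σO j ≠ σX i and σO i ≠ σX j. Then (σX, σO * Equiv.swap i j) is again a valid grid diagram, its connection permutation equals (Equiv.swap i j) * (σO⁻¹ * σX), and the number of orbits on Fin n of the cyclic subgroup generated by its connection permutation differs from that of σO⁻¹ * σX by exactly one; i.e., this grid move changes the number of link components by exactly one. -/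
/-!
Write `τ = swap x y * σ`. Away from the `σ`-cycles through `x` and `y`, `τ` and `σ` have the same
orbits. If `x` and `y` lie in different `σ`-cycles, the `σ`-orbit of `x` returns to `x` without
meeting `y`, and the swap redirects that return to `y`: the two cycles merge into one `τ`-cycle.
If they lie in the same cycle, the `σ`-path from `x` first reaches `y`, and the swap sends it back
to `x`, so `τ` separates `x` from `y`; since `σ = swap x y * τ`, this is the merge case read
backwards.
-/

open Equiv Equiv.Perm

theorem Function.Surjective.nat_card_eq_add_one_of_injOn_compl {A B : Type*} [Finite A]
    {f : A → B} (hf : Function.Surjective f) {p q : A} (hpq : p ≠ q) (hfpq : f p = f q)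
    (hinj : Set.InjOn f {q}ᶜ) : Nat.card A = Nat.card B + 1 := by
  classical
  have hbij : Function.Bijective fun a : {a // a ≠ q} => f a := by
    refine ⟨fun a b hab => Subtype.ext (hinj a.2 b.2 hab), fun b => ?_⟩
    obtain ⟨a, rfl⟩ := hf b
    by_cases ha : a = q
    · exact ⟨⟨p, hpq⟩, by simp [hfpq, ha]⟩
    · exact ⟨⟨a, ha⟩, rfl⟩
  rw [← Nat.card_congr (Equiv.optionSubtypeNe q), Finite.card_option,
    Nat.card_congr (Equiv.ofBijective _ hbij)]

namespace Equiv.Perm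

variable {α : Type*}

/-- The number of cycles of `σ`, fixed points included; for the connection permutation of a grid
diagram, the number of link components. -/
noncomputable def numOrbits (σ : Perm α) : ℕ :=
  Nat.card (MulAction.orbitRel.Quotient (Subgroup.zpowers σ) α)

theorem orbitRel_zpowers_iff {σ : Perm α} {a b : α} :
    MulAction.orbitRel (Subgroup.zpowers σ) α a b ↔ σ.SameCycle a b := by
  rw [MulAction.orbitRel_apply, MulAction.mem_orbit_iff, sameCycle_comm]
  constructor
  · rintro ⟨⟨_, k, rfl⟩, h⟩
    exact ⟨k, h⟩
  · rintro ⟨k, h⟩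
    exact ⟨⟨σ ^ k, k, rfl⟩, h⟩

variable [DecidableEq α] {σ : Perm α} {x y a b : α}

theorem swap_mul_pow_apply_of_forall {k : ℕ}
    (h : ∀ m, 0 < m → m ≤ k → (σ ^ m) a ≠ x ∧ (σ ^ m) a ≠ y) :
    ((swap x y * σ) ^ k) a = (σ ^ k) a := by
  induction k with
  | zero => rfl
  | succ k ih =>
    obtain ⟨hx, hy⟩ := h (k + 1) k.succ_pos le_rfl
    rw [pow_succ', mul_apply, ih fun m hm hmk => h m hm (hmk.trans k.le_succ), mul_apply,
      ← mul_apply σ, ← pow_succ', swap_apply_of_ne_of_ne hx hy]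

theorem swap_mul_pow_succ_apply_of_forall {k : ℕ}
    (h : ∀ m, 0 < m → m ≤ k → (σ ^ m) a ≠ x ∧ (σ ^ m) a ≠ y) :
    ((swap x y * σ) ^ (k + 1)) a = swap x y ((σ ^ (k + 1)) a) := by
  rw [pow_succ', mul_apply, swap_mul_pow_apply_of_forall h, mul_apply, ← mul_apply σ, ← pow_succ']

theorem swap_mul_pow_apply_of_not_sameCycle (hx : ¬σ.SameCycle a x) (hy : ¬σ.SameCycle a y)
    (k : ℕ) : ((swap x y * σ) ^ k) a = (σ ^ k) a :=
  swap_mul_pow_apply_of_forall fun m _ _ =>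
    ⟨fun h => hx ⟨m, by rwa [zpow_natCast]⟩, fun h => hy ⟨m, by rwa [zpow_natCast]⟩⟩

variable [Finite α]

theorem SameCycle.of_swap_mul_of_not_sameCycle (hx : ¬σ.SameCycle a x)
    (hy : ¬σ.SameCycle a y) (h : (swap x y * σ).SameCycle a b) : σ.SameCycle a b := by
  obtain ⟨k, rfl⟩ := h.exists_nat_pow_eq
  exact ⟨k, by rw [zpow_natCast, swap_mul_pow_apply_of_not_sameCycle hx hy]⟩

theorem sameCycle_swap_mul_of_not_sameCycle (hxy : ¬σ.SameCycle x y) :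
    (swap x y * σ).SameCycle x y := by
  classical
  have hper : ∃ k, 0 < k ∧ (σ ^ k) x = x :=
    ⟨orderOf σ, orderOf_pos σ, by rw [pow_orderOf_eq_one, one_apply]⟩
  obtain ⟨hpos, hk⟩ := Nat.find_spec hper
  obtain ⟨k, hk'⟩ : ∃ k, Nat.find hper = k + 1 := Nat.exists_eq_add_one.mpr hpos
  refine ⟨(k + 1 : ℕ), ?_⟩
  rw [zpow_natCast, swap_mul_pow_succ_apply_of_forall, ← hk', hk, swap_apply_left]
  exact fun m hm hmk => ⟨fun h => Nat.find_min hper (by omega) ⟨hm, h⟩,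
    fun h => hxy ⟨m, by rwa [zpow_natCast]⟩⟩

theorem not_sameCycle_swap_mul_of_sameCycle (hne : x ≠ y) (hxy : σ.SameCycle x y) :
    ¬(swap x y * σ).SameCycle x y := by
  classical
  have hhit : ∃ k, (σ ^ k) x = y := hxy.exists_nat_pow_eq
  have hk : (σ ^ Nat.find hhit) x = y := Nat.find_spec hhit
  have hmin : ∀ m < Nat.find hhit, (σ ^ m) x ≠ y := fun m => Nat.find_min hhit
  obtain ⟨k, hk'⟩ : ∃ k, Nat.find hhit = k + 1 :=
    Nat.exists_eq_add_one.mpr (Nat.pos_of_ne_zero fun h0 => hne (by simpa [h0] using hk))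
  -- a return of `x` at time `m` would let `y` be reached at the earlier time `k + 1 - m`
  have hret : ∀ m, 0 < m → m ≤ k → (σ ^ m) x ≠ x ∧ (σ ^ m) x ≠ y := by
    refine fun m hm hmk => ⟨fun h => hmin (k + 1 - m) (by omega) ?_, hmin m (by omega)⟩
    calc (σ ^ (k + 1 - m)) x = (σ ^ (k + 1 - m)) ((σ ^ m) x) := by rw [h]
      _ = (σ ^ Nat.find hhit) x := by
        rw [← mul_apply, ← pow_add, Nat.sub_add_cancel (by omega), hk']
      _ = y := hk
  have hagree : ∀ m ≤ k, ((swap x y * σ) ^ m) x = (σ ^ m) x := fun m hm =>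
    swap_mul_pow_apply_of_forall fun l hl hlm => hret l hl (hlm.trans hm)
  have hperiod : ((swap x y * σ) ^ (k + 1)) x = x := by
    rw [swap_mul_pow_succ_apply_of_forall hret, ← hk', hk, swap_apply_right]
  rintro h
  obtain ⟨i, hi⟩ := h.exists_nat_pow_eq
  have hmod : i % (k + 1) ≤ k := Nat.lt_succ_iff.mp (Nat.mod_lt _ k.succ_pos)
  have hi_mod : ((swap x y * σ) ^ i) x = ((swap x y * σ) ^ (i % (k + 1))) x := by
    conv_lhs => rw [← Nat.mod_add_div i (k + 1), pow_add, pow_mul, mul_apply,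
      pow_apply_eq_self_of_apply_eq_self hperiod]
  exact hmin (i % (k + 1)) (by omega) (by rw [← hagree _ hmod, ← hi_mod, hi])

theorem SameCycle.swap_mul_of_not_sameCycle (hxy : ¬σ.SameCycle x y) (h : σ.SameCycle a b) :
    (swap x y * σ).SameCycle a b := by
  set τ := swap x y * σ
  have hswap : ∀ z, τ.SameCycle z (swap x y z) := by
    intro z
    rw [swap_apply_def]
    split_ifs with hzx hzy
    · exact hzx ▸ sameCycle_swap_mul_of_not_sameCycle hxy
    · exact hzy ▸ (sameCycle_swap_mul_of_not_sameCycle hxy).symm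
    · rfl
  -- each `σ`-step from `c` is a `τ`-step followed by the transposition
  have hstep : ∀ c, τ.SameCycle c (σ c) := fun c => by
    simpa [τ, swap_apply_self] using (SameCycle.refl τ c).apply_right.trans (hswap (τ c))
  obtain ⟨k, rfl⟩ := h.exists_nat_pow_eq
  clear h
  induction k with
  | zero => rfl
  | succ k ih => exact ih.trans (by rw [pow_succ', mul_apply]; exact hstep _)

theorem numOrbits_eq_numOrbits_swap_mul_add_one (hxy : ¬σ.SameCycle x y) :
    numOrbits σ = numOrbits (swap x y * σ) + 1 := by
  have mk_eq_mk {τ : Perm α} {c d : α} :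
      (⟦c⟧ : MulAction.orbitRel.Quotient (Subgroup.zpowers τ) α) = ⟦d⟧ ↔ τ.SameCycle c d :=
    Quotient.eq.trans orbitRel_zpowers_iff
  let f : MulAction.orbitRel.Quotient (Subgroup.zpowers σ) α →
      MulAction.orbitRel.Quotient (Subgroup.zpowers (swap x y * σ)) α :=
    Quotient.map id fun c d h => orbitRel_zpowers_iff.mpr
      ((orbitRel_zpowers_iff.mp h).swap_mul_of_not_sameCycle hxy)
  refine Function.Surjective.nat_card_eq_add_one_of_injOn_compl (f := f) (p := ⟦x⟧) (q := ⟦y⟧)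
    (Quotient.ind fun c => ⟨⟦c⟧, rfl⟩) (fun h => hxy (mk_eq_mk.mp h))
    (mk_eq_mk.mpr (sameCycle_swap_mul_of_not_sameCycle hxy)) ?_
  rintro ⟨c⟩ hc ⟨d⟩ hd hcd
  replace hc : ¬σ.SameCycle c y := fun h => hc (mk_eq_mk.mpr h)
  replace hd : ¬σ.SameCycle d y := fun h => hd (mk_eq_mk.mpr h)
  replace hcd : (swap x y * σ).SameCycle c d := mk_eq_mk.mp hcd
  refine mk_eq_mk.mpr ?_
  by_cases hcx : σ.SameCycle c x
  · by_cases hdx : σ.SameCycle d x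
    · exact hcx.trans hdx.symm
    · exact (hcd.symm.of_swap_mul_of_not_sameCycle hdx hd).symm
  · exact hcd.of_swap_mul_of_not_sameCycle hcx hc

theorem numOrbits_swap_mul_eq_add_one (hne : x ≠ y) (hxy : σ.SameCycle x y) :
    numOrbits (swap x y * σ) = numOrbits σ + 1 := by
  simpa [← mul_assoc] using
    numOrbits_eq_numOrbits_swap_mul_add_one (not_sameCycle_swap_mul_of_sameCycle hne hxy)

theorem numOrbits_swap_mul_eq_add_one_or (hne : x ≠ y) :
    numOrbits (swap x y * σ) = numOrbits σ + 1 ∨ numOrbits σ = numOrbits (swap x y * σ) + 1 := by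
  by_cases hxy : σ.SameCycle x y
  · exact .inl (numOrbits_swap_mul_eq_add_one hne hxy)
  · exact .inr (numOrbits_eq_numOrbits_swap_mul_add_one hxy)

end Equiv.Perm

/-- Exchanging the two `O` markings between rows `i` and `j` of a grid diagram is a
coherent band attachment: the result `(σX, σO * Equiv.swap i j)` is again a valid
grid diagram, its connection permutation is `Equiv.swap i j * (σO⁻¹ * σX)`, and the
number of orbits on `Fin n` of the cyclic subgroup generated by the connection
permutation (i.e., the number of link components) changes by exactly one. -/
theorem swap_O_markings_is_coherent_band {n : ℕ} (σX σO : Equiv.Perm (Fin n))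
    (hvalid : ∀ k, σX k ≠ σO k) (i j : Fin n) (hij : i ≠ j)
    (h1 : σO j ≠ σX i) (h2 : σO i ≠ σX j) :
    (∀ k, σX k ≠ (σO * Equiv.swap i j) k) ∧
    (σO * Equiv.swap i j)⁻¹ * σX = Equiv.swap i j * (σO⁻¹ * σX) ∧
    (Nat.card (MulAction.orbitRel.Quotient
        (Subgroup.zpowers (Equiv.swap i j * (σO⁻¹ * σX))) (Fin n)) =
      Nat.card (MulAction.orbitRel.Quotient
        (Subgroup.zpowers (σO⁻¹ * σX)) (Fin n)) + 1 ∨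
     Nat.card (MulAction.orbitRel.Quotient
        (Subgroup.zpowers (σO⁻¹ * σX)) (Fin n)) =
      Nat.card (MulAction.orbitRel.Quotient
        (Subgroup.zpowers (Equiv.swap i j * (σO⁻¹ * σX))) (Fin n)) + 1) := by
  refine ⟨fun k => ?_, by rw [mul_inv_rev, swap_inv, mul_assoc],
    numOrbits_swap_mul_eq_add_one_or hij⟩
  rw [mul_apply, swap_apply_def]
  split_ifs with hki hkj
  · exact hki ▸ h1.symm
  · exact hkj ▸ h2.symm
  · exact hvalid k
end
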